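/- Hoeffding-type concentration bound for empirical fluxes of a classical Markov chain (Proposition 5.2): Let F := {h : E → ℂ with Σ_{x∈E} σ_x h(x) = 0}; Id−P maps F bijectively onto F, and let ‖(Id−P)^{-1}|_F‖_∞ be the operator norm of its inverse on F induced by the sup-norm on functions. Let f : Ẽ → ℝ satisfy π(f) = 0 and max_{(x,y)∈Ẽ}|f(x,y)| = c for some c > 0, and set G := (1 + ‖(Id−P)^{-1}|_F‖_∞)·c. Then for every initial law ν, every γ > 0 and every n ≥ 1 with nγ ≥ 2G: P_ν( (1/n)·Σ_{k=1}^n f(X_k, X_{k+1}) ≥ γ ) ≤ exp( −(nγ − 2G)² / (2(n−1)G²) ). -/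

import Mathlib

open Matrix MeasureTheory Finset
open scoped ComplexOrder
noncomputable section

/-- The algebra `M_d(ℂ)` of `d × d` complex matrices. -/
abbrev Md (d : ℕ) := Matrix (Fin d) (Fin d) ℂ

/-- KMS inner product `⟨x,y⟩ = tr(s x* s y)` where `s = σ^{1/2}`. -/
def kmsInner {d : ℕ} (s x y : Md d) : ℂ := (s * xᴴ * s * y).trace

/-- KMS norm `‖x‖₂ = tr(s x* s x)^{1/2}` where `s = σ^{1/2}`. -/
def kmsNorm {d : ℕ} (s x : Md d) : ℝ := Real.sqrt ((s * xᴴ * s * x).trace.re)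

/-- Operator norm of a map on `M_d(ℂ)` induced by the KMS norm. -/
def kmsOpNorm {d : ℕ} (s : Md d) (η : Md d → Md d) : ℝ :=
  sInf {C : ℝ | 0 ≤ C ∧ ∀ x, kmsNorm s (η x) ≤ C * kmsNorm s x}

/-- Spectral (operator) norm of a matrix, i.e. the operator norm of the induced map
on Euclidean space. -/
def specNorm {d : ℕ} (x : Md d) : ℝ :=
  ‖(LinearMap.toContinuousLinearMap (Matrix.toEuclideanLin x))‖

/-- The square root of a positive semidefinite matrix, as `Matrix.PosSemidef.sqrt` was
defined in the older Mathlib (removed since). -/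
def posSemidefSqrtOld {d : ℕ} {A : Md d} (hA : A.PosSemidef) : Md d :=
  hA.1.eigenvectorUnitary.1 * diagonal ((↑) ∘ (√·) ∘ hA.1.eigenvalues) *
  (star hA.1.eigenvectorUnitary : Md d)


/-- The positive square root `σ^{1/2}` of a positive definite state. -/
def sqrtm {d : ℕ} (σ : Md d) (hσ : σ.PosDef) : Md d := posSemidefSqrtOld hσ.posSemidef

/-- The quantum channel (Heisenberg picture) `Φ(x) = Σ_i V_i* x V_i`. -/
def channel {d : ℕ} {I : Type*} [Fintype I] (V : I → Md d) (x : Md d) : Md d :=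
  ∑ i, (V i)ᴴ * x * V i

/-- The dual (Schrödinger picture) channel `Φ*(ρ) = Σ_i V_i ρ V_i*`. -/
def channelDual {d : ℕ} {I : Type*} [Fintype I] (V : I → Md d) (ρ : Md d) : Md d :=
  ∑ i, V i * ρ * (V i)ᴴ

/-- The KMS adjoint `Φ† = Γ_σ^{-1/2} ∘ Φ* ∘ Γ_σ^{1/2}` of the channel with Kraus
operators `V`, where `s = σ^{1/2}`. -/
def channelKMSAdj {d : ℕ} {I : Type*} [Fintype I] (V : I → Md d) (s : Md d) (x : Md d) : Md d :=
  s⁻¹ * channelDual V (s * x * s) * s⁻¹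

/-- Irreducibility of a completely positive map given by Kraus operators `W`:
for every nonzero `v` the span of all `W_{j_n} ⋯ W_{j_1} v` is everything. -/
def IrredKraus {d : ℕ} {J : Type*} (W : J → Md d) : Prop :=
  ∀ v : Fin d → ℂ, v ≠ 0 →
    Submodule.span ℂ {u : Fin d → ℂ | ∃ l : List J, u = ((l.map W).prod).mulVec v} = ⊤

/-- The operator `V_{i_n} ⋯ V_{i_1}` associated with a measurement trajectory. -/
def trajOp {d : ℕ} {I : Type*} (V : I → Md d) {n : ℕ} (ω : Fin n → I) : Md d :=
  ((List.ofFn fun k => V (ω k)).reverse).prod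

/-- The probability `tr(V_{i_n} ⋯ V_{i_1} ρ V_{i_1}* ⋯ V_{i_n}*)` of a trajectory. -/
def trajProb {d : ℕ} {I : Type*} (V : I → Md d) (ρ : Md d) {n : ℕ} (ω : Fin n → I) : ℝ :=
  ((trajOp V ω) * ρ * (trajOp V ω)ᴴ).trace.re

/-- The function `h(x) = 1/(√(1+x) + x/2 + 1)` from the Bernstein bound. -/
def hfun (x : ℝ) : ℝ := (Real.sqrt (1 + x) + x / 2 + 1)⁻¹

/-- The norm `‖(Id - Φ)^{-1}|_F‖_∞` of the inverse of `Id - Φ` on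
`F = {x : tr(σ x) = 0}`, with respect to the spectral norm. -/
def pseudoResNorm {d : ℕ} {I : Type*} [Fintype I] (V : I → Md d) (σ : Md d) : ℝ :=
  sInf {C : ℝ | 0 ≤ C ∧ ∀ x : Md d, (σ * x).trace = 0 →
    specNorm x ≤ C * specNorm (x - channel V x)}

/-- The norm `‖(Id−P)^{-1}|_F‖_∞` of the inverse of `Id − P` on
`F = {h : E → ℂ : Σ_x σ_x h(x) = 0}`, induced by the sup-norm on functions. -/
def pseudoResNormClassical {E : Type*} [Fintype E] (p : E → E → ℝ) (σ : E → ℝ) : ℝ :=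
  sInf {C : ℝ | 0 ≤ C ∧ ∀ h : E → ℂ, (∑ x, (σ x : ℂ) * h x = 0) →
    ‖h‖ ≤ C * ‖(fun x => h x - ∑ y, (p x y : ℂ) * h y)‖}

/-!
Let `u = P f` (the mean flux out of each state). Since `σ(u) = π(f) = 0`, the Poisson equation
`g - P g = u` has a solution with `‖g‖_∞ ≤ ‖(Id - P)⁻¹|_F‖_∞ c`, and then
`D(x, y) = f(x, y) + g(y) - g(x)` has mean zero under `p x ·` while `f(x, y) + g(y)` lies in
`[-G, G]`. By Hoeffding's lemma the tilted kernel `p e^{λD}` has row sums at most `e^{G²λ²/2}`.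
Telescoping, the flux of the first `n - 1` steps equals `∑ D + g(X_1) - g(X_n)`, and the last step
adds at most `c`, so the event forces `∑ D ≥ nγ - 2G`; Chernoff's bound with the optimal `λ`
finishes.
-/

/-- Hoeffding's lemma for the law `∑ i, q i • δ (z i)`. -/
theorem sum_mul_exp_sub_mean_le_of_abs_le {ι : Type*} [Fintype ι] {q z : ι → ℝ} {G : ℝ}
    (hq0 : ∀ i, 0 ≤ q i) (hq1 : ∑ i, q i = 1) (hz : ∀ i, 0 < q i → |z i| ≤ G) (t : ℝ) :
    ∑ i, q i * Real.exp (t * (z i - ∑ j, q j * z j)) ≤ Real.exp (G ^ 2 * t ^ 2 / 2) := by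
  set μ : Measure ℝ := ∑ i, ENNReal.ofReal (q i) • Measure.dirac (z i)
  have hint : ∀ φ : ℝ → ℝ, ∫ x, φ x ∂μ = ∑ i, q i * φ (z i) := by
    intro φ
    rw [integral_finsetSum_measure]
    · simp [integral_smul_measure, ENNReal.toReal_ofReal (hq0 _)]
    · exact fun i _ => (integrable_dirac enorm_lt_top).smul_measure ENNReal.ofReal_ne_top
  have hμ : IsProbabilityMeasure μ := ⟨by
    simp [μ, ← ENNReal.ofReal_sum_of_nonneg (fun i _ => hq0 i), hq1]⟩
  have hb : ∀ᵐ x ∂μ, x ∈ Set.Icc (-G) G := by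
    simp only [μ, ae_iff, Measure.coe_finsetSum, Finset.sum_apply, Measure.smul_apply,
      smul_eq_mul, Finset.sum_eq_zero_iff, Finset.mem_univ, forall_const]
    intro i
    simpa [or_iff_not_imp_left, abs_le] using hz i
  have := (ProbabilityTheory.hasSubgaussianMGF_of_mem_Icc aemeasurable_id hb).mgf_le t
  simp only [ProbabilityTheory.mgf, hint, id] at this
  convert this using 2
  simp [← two_mul, sq_abs]

namespace Matrix

variable {n : Type*} [Fintype n] [DecidableEq n] {M : Matrix n n ℝ} {h : n → ℝ}

theorem eq_of_mulVec_eq_self_of_isMax (hM : M ∈ rowStochastic ℝ n) (hh : M *ᵥ h = h) {x y : n}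
    (hx : ∀ z, h z ≤ h x) (hxy : 0 < M x y) : h y = h x := by
  have hsum : ∑ z, M x z * (h x - h z) = 0 := by
    simp only [mul_sub, sum_sub_distrib, ← sum_mul, sum_row_of_mem_rowStochastic hM, one_mul]
    exact sub_eq_zero.2 (congrFun hh x).symm
  have hterm := (sum_eq_zero_iff_of_nonneg fun z _ =>
    mul_nonneg (nonneg_of_mem_rowStochastic hM) (sub_nonneg.2 (hx z))).1 hsum y (mem_univ y)
  rcases mul_eq_zero.1 hterm with h0 | h0
  · exact absurd h0 hxy.ne'
  · linarith

theorem eq_of_mulVec_eq_self (hM : M ∈ rowStochastic ℝ n) (hirr : ∀ x y, ∃ k, 0 < (M ^ k) x y)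
    (hh : M *ᵥ h = h) (x y : n) : h x = h y := by
  obtain ⟨x₀, -, hmax⟩ := exists_max_image univ h ⟨x, mem_univ x⟩
  have hpow : ∀ k : ℕ, (M ^ k) *ᵥ h = h := by
    intro k
    induction k with
    | zero => simp
    | succ k ih => rw [pow_succ, ← mulVec_mulVec, hh, ih]
  have hconst : ∀ z, h z = h x₀ := fun z => by
    obtain ⟨k, hk⟩ := hirr x₀ z
    exact eq_of_mulVec_eq_self_of_isMax (pow_mem hM k) (hpow k) (fun w => hmax w (mem_univ w)) hk
  rw [hconst x, hconst y]

end Matrix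

namespace Matrix

section Fundamental

variable {K n : Type*} [Field K] [Fintype n] [DecidableEq n] {Q : Matrix n n K} {s : n → K}

/-- On the hyperplane `s ⬝ᵥ h = 0` this agrees with `I - Q`, while the rank-one term `𝟙 sᵀ`
repairs the kernel of `I - Q` (the constants), so that it is invertible on all of `n → K`. -/
def fundamental (Q : Matrix n n K) (s : n → K) : Matrix n n K := 1 - Q + vecMulVec 1 s

theorem fundamental_mulVec (h : n → K) :
    fundamental Q s *ᵥ h = h - Q *ᵥ h + (s ⬝ᵥ h) • 1 := by
  rw [fundamental, add_mulVec, sub_mulVec, one_mulVec, vecMulVec_mulVec, op_smul_eq_smul]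

theorem dotProduct_fundamental_mulVec (hs : s ᵥ* Q = s) (hs1 : s ⬝ᵥ 1 = 1) (h : n → K) :
    s ⬝ᵥ (fundamental Q s *ᵥ h) = s ⬝ᵥ h := by
  rw [fundamental_mulVec, dotProduct_add, dotProduct_sub, dotProduct_mulVec, hs,
    dotProduct_smul, hs1, smul_eq_mul, mul_one, sub_self, zero_add]

theorem fundamental_mulVec_injective (hs : s ᵥ* Q = s) (hs1 : s ⬝ᵥ 1 = 1)
    (hker : ∀ h, s ⬝ᵥ h = 0 → Q *ᵥ h = h → h = 0) :
    Function.Injective (fundamental Q s).mulVec := by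
  refine (injective_iff_map_eq_zero (fundamental Q s).mulVecLin).2 fun h hZ => ?_
  rw [mulVecLin_apply] at hZ
  have hs0 : s ⬝ᵥ h = 0 := by rw [← dotProduct_fundamental_mulVec hs hs1, hZ, dotProduct_zero]
  rw [fundamental_mulVec, hs0, zero_smul, add_zero, sub_eq_zero] at hZ
  exact hker h hs0 hZ.symm

theorem exists_sub_mulVec_eq (hs : s ᵥ* Q = s) (hs1 : s ⬝ᵥ 1 = 1)
    (hker : ∀ h, s ⬝ᵥ h = 0 → Q *ᵥ h = h → h = 0) {u : n → K} (hu : s ⬝ᵥ u = 0) :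
    ∃ g, s ⬝ᵥ g = 0 ∧ g - Q *ᵥ g = u := by
  have hZ := fundamental_mulVec_injective hs hs1 hker
  obtain ⟨g, hg⟩ := mulVec_surjective_iff_isUnit.2 (mulVec_injective_iff_isUnit.1 hZ) u
  have hg0 : s ⬝ᵥ g = 0 := by rw [← dotProduct_fundamental_mulVec hs hs1, hg, hu]
  refine ⟨g, hg0, ?_⟩
  rwa [fundamental_mulVec, hg0, zero_smul, add_zero] at hg

end Fundamental

theorem exists_norm_le_mul_norm_sub_mulVec {𝕜 n : Type*} [NontriviallyNormedField 𝕜]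
    [CompleteSpace 𝕜] [Fintype n] [DecidableEq n] {Q : Matrix n n 𝕜} {s : n → 𝕜}
    (hs : s ᵥ* Q = s) (hs1 : s ⬝ᵥ 1 = 1) (hker : ∀ h, s ⬝ᵥ h = 0 → Q *ᵥ h = h → h = 0) :
    ∃ C ≥ 0, ∀ h, s ⬝ᵥ h = 0 → ‖h‖ ≤ C * ‖h - Q *ᵥ h‖ := by
  obtain ⟨C, -, hC⟩ := (fundamental Q s).mulVecLin.exists_antilipschitzWith
    (LinearMap.ker_eq_bot.2 (fundamental_mulVec_injective hs hs1 hker))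
  refine ⟨C, C.2, fun h hh => ?_⟩
  have := hC.le_mul_norm (map_zero _) h
  rwa [mulVecLin_apply, fundamental_mulVec, hh, zero_smul, add_zero] at this

section OfReal

variable {E : Type*} [Fintype E]

theorem re_map_ofReal_mulVec (P : Matrix E E ℝ) (h : E → ℂ) (x : E) :
    ((P.map (↑) *ᵥ h) x).re = (P *ᵥ fun y => (h y).re) x := by
  simp [mulVec, dotProduct, Complex.re_sum]

theorem im_map_ofReal_mulVec (P : Matrix E E ℝ) (h : E → ℂ) (x : E) :
    ((P.map (↑) *ᵥ h) x).im = (P *ᵥ fun y => (h y).im) x := by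
  simp [mulVec, dotProduct, Complex.im_sum]

end OfReal

end Matrix

theorem le_csInf_mul {S : Set ℝ} {a b : ℝ} (hb : 0 ≤ b) (hS : S.Nonempty)
    (h : ∀ C ∈ S, a ≤ C * b) : a ≤ sInf S * b := by
  rcases hb.eq_or_lt with rfl | hb
  · obtain ⟨C, hC⟩ := hS
    simpa using h C hC
  · rw [← div_le_iff₀ hb]
    exact le_csInf hS fun C hC => (div_le_iff₀ hb).2 (h C hC)

theorem pseudoResNormClassical_nonneg {E : Type*} [Fintype E] (p : E → E → ℝ) (σ : E → ℝ) :
    0 ≤ pseudoResNormClassical p σ :=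
  Real.sInf_nonneg fun _ hC => hC.1

section Poisson

variable {E : Type*} [Fintype E] [DecidableEq E] {P : Matrix E E ℝ} {σ : E → ℝ}

theorem eq_zero_of_map_ofReal_mulVec_eq (hP : P ∈ rowStochastic ℝ E)
    (hirr : ∀ x y, ∃ k, 0 < (P ^ k) x y) (hσ1 : ∑ x, σ x = 1) {h : E → ℂ}
    (hh0 : (fun x => (σ x : ℂ)) ⬝ᵥ h = 0) (hh : P.map (↑) *ᵥ h = h) : h = 0 := by
  have hconst : ∀ x y, h y = h x := fun x y => Complex.ext
    (eq_of_mulVec_eq_self hP hirr (funext fun z => by rw [← re_map_ofReal_mulVec, hh]) y x)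
    (eq_of_mulVec_eq_self hP hirr (funext fun z => by rw [← im_map_ofReal_mulVec, hh]) y x)
  funext x
  rw [Pi.zero_apply, ← hh0, dotProduct, sum_congr rfl fun y _ => by rw [hconst x y], ← sum_mul,
    ← Complex.ofReal_sum, hσ1, Complex.ofReal_one, one_mul]

/-- `pseudoResNormClassical` is defined on complex functions, so the equation is solved over `ℂ`
and the real part is taken. -/
theorem exists_poisson_solution (hP : P ∈ rowStochastic ℝ E)
    (hirr : ∀ x y, ∃ k, 0 < (P ^ k) x y) (hσ : σ ᵥ* P = σ) (hσ1 : ∑ x, σ x = 1) {u : E → ℝ}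
    (hu : σ ⬝ᵥ u = 0) :
    ∃ g : E → ℝ, g - P *ᵥ g = u ∧ ‖g‖ ≤ pseudoResNormClassical P σ * ‖u‖ := by
  set s : E → ℂ := fun x => (σ x : ℂ)
  have hs : s ᵥ* P.map (↑) = s := funext fun x =>
    (Complex.ofRealHom.map_vecMul P σ x).symm.trans (by rw [hσ]; rfl)
  have hs1 : s ⬝ᵥ 1 = 1 := by simp [s, dotProduct, ← Complex.ofReal_sum, hσ1]
  have hker := fun h => eq_zero_of_map_ofReal_mulVec_eq (h := h) hP hirr hσ1
  obtain ⟨C, hC0, hC⟩ := exists_norm_le_mul_norm_sub_mulVec hs hs1 hker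
  obtain ⟨g, hg0, hg⟩ := exists_sub_mulVec_eq hs hs1 hker (u := fun x => (u x : ℂ))
    (by rw [dotProduct] at hu; simp only [s, dotProduct]; exact_mod_cast hu)
  refine ⟨fun x => (g x).re, funext fun x => ?_, ?_⟩
  · simpa [← re_map_ofReal_mulVec] using congrArg Complex.re (congrFun hg x)
  · calc ‖fun x => (g x).re‖ ≤ ‖g‖ := (pi_norm_le_iff_of_nonneg (norm_nonneg g)).2 fun x =>
          (Complex.abs_re_le_norm _).trans (norm_le_pi_norm g x)
      _ ≤ pseudoResNormClassical P σ * ‖g - P.map (↑) *ᵥ g‖ :=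
          le_csInf_mul (norm_nonneg _) ⟨C, hC0, hC⟩ fun C' hC' => hC'.2 g hg0
      _ = pseudoResNormClassical P σ * ‖u‖ := by
          rw [hg]
          simp [Pi.norm_def, Complex.nnnorm_real]

end Poisson

theorem Fin.sum_univ_succ_sub_castSucc {M : Type*} [AddCommGroup M] {m : ℕ}
    (F : Fin (m + 1) → M) : ∑ k : Fin m, (F k.succ - F k.castSucc) = F (Fin.last m) - F 0 := by
  rw [Finset.sum_sub_distrib, sub_eq_sub_iff_add_eq_add, add_comm, ← Fin.sum_univ_succ,
    Fin.sum_univ_castSucc, add_comm]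

section Paths

variable {E : Type*} {m : ℕ}

@[to_additive]
theorem Fin.prod_snoc_castSucc_succ {M : Type*} [CommMonoid M] (F : E → E → M)
    (ω : Fin (m + 1) → E) (y : E) :
    ∏ k : Fin (m + 1), F ((Fin.snoc ω y : Fin (m + 2) → E) k.castSucc)
      ((Fin.snoc ω y : Fin (m + 2) → E) k.succ) =
      (∏ k : Fin m, F (ω k.castSucc) (ω k.succ)) * F (ω (Fin.last m)) y := by
  simp [Fin.prod_univ_castSucc, ← Fin.castSucc_succ]

theorem Fin.sum_univ_fun_snoc {M : Type*} [Fintype E] [AddCommMonoid M]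
    (Φ : (Fin (m + 2) → E) → M) :
    ∑ ω, Φ ω = ∑ ω : Fin (m + 1) → E, ∑ y, Φ (Fin.snoc ω y) := by
  rw [← (Fin.snocEquiv fun _ => E).sum_comp, Fintype.sum_prod_type, Finset.sum_comm]
  rfl

/-- `P_ν(X_1 = ω 0, …, X_{m+1} = ω m)` when `q` is the transition matrix. -/
def pathWeight (ν : E → ℝ) (q : E → E → ℝ) (ω : Fin (m + 1) → E) : ℝ :=
  ν (ω 0) * ∏ k : Fin m, q (ω k.castSucc) (ω k.succ)

theorem pathWeight_snoc (ν : E → ℝ) (q : E → E → ℝ) (ω : Fin (m + 1) → E) (y : E) :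
    pathWeight ν q (Fin.snoc ω y : Fin (m + 2) → E) = pathWeight ν q ω * q (ω (Fin.last m)) y := by
  rw [pathWeight, pathWeight, Fin.prod_snoc_castSucc_succ, ← Fin.castSucc_zero, Fin.snoc_castSucc,
    mul_assoc]

theorem pathWeight_mul_exp (ν : E → ℝ) (q D : E → E → ℝ) (ω : Fin (m + 1) → E) :
    pathWeight ν (fun x y => q x y * Real.exp (D x y)) ω =
      pathWeight ν q ω * Real.exp (∑ k : Fin m, D (ω k.castSucc) (ω k.succ)) := by
  rw [pathWeight, pathWeight, prod_mul_distrib, Real.exp_sum, mul_assoc]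

variable {ν : E → ℝ} {q : E → E → ℝ}

theorem pathWeight_nonneg (hν0 : ∀ x, 0 ≤ ν x) (hq0 : ∀ x y, 0 ≤ q x y)
    (ω : Fin (m + 1) → E) : 0 ≤ pathWeight ν q ω :=
  mul_nonneg (hν0 _) (prod_nonneg fun _ _ => hq0 _ _)

theorem sum_pathWeight_le [Fintype E] (hν0 : ∀ x, 0 ≤ ν x) (hq0 : ∀ x y, 0 ≤ q x y) {K : ℝ}
    (hK0 : 0 ≤ K) (hK : ∀ x, ∑ y, q x y ≤ K) (m : ℕ) :
    ∑ ω : Fin (m + 1) → E, pathWeight ν q ω ≤ (∑ x, ν x) * K ^ m := by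
  induction m with
  | zero =>
    simp only [pathWeight, Finset.univ_eq_empty, prod_empty, mul_one, pow_zero]
    exact (Fintype.sum_equiv (Equiv.funUnique (Fin 1) E) _ _ fun _ => rfl).le
  | succ m ih =>
    calc ∑ ω : Fin (m + 2) → E, pathWeight ν q ω
        = ∑ ω : Fin (m + 1) → E, pathWeight ν q ω * ∑ y, q (ω (Fin.last m)) y := by
          simp only [Fin.sum_univ_fun_snoc, pathWeight_snoc, mul_sum]
      _ ≤ ∑ ω : Fin (m + 1) → E, pathWeight ν q ω * K := by
          gcongr with ω
          · exact pathWeight_nonneg hν0 hq0 ω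
          · exact hK _
      _ ≤ (∑ x, ν x) * K ^ (m + 1) := by
          rw [← sum_mul, pow_succ, ← mul_assoc]
          gcongr

end Paths

/-- Chernoff bound with `λ = t / (m G²)`: the tilted kernel `p x y * exp (λ * D x y)` has row
sums at most `exp (G² λ² / 2)`, and the event `A` may look one step beyond the increments. -/
theorem sum_indicator_pathWeight_le {E : Type*} [Fintype E] {m : ℕ} {p : E → E → ℝ}
    {ν : E → ℝ} (hp0 : ∀ x y, 0 ≤ p x y) (hp1 : ∀ x, ∑ y, p x y = 1) (hν0 : ∀ x, 0 ≤ ν x)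
    (hν1 : ∑ x, ν x = 1) {D : E → E → ℝ} {G : ℝ}
    (hD : ∀ x l, ∑ y, p x y * Real.exp (l * D x y) ≤ Real.exp (G ^ 2 * l ^ 2 / 2))
    {A : Set (Fin (m + 2) → E)} {t : ℝ} (ht : 0 ≤ t)
    (hA : ∀ ω y, 0 < p (ω (Fin.last m)) y → (Fin.snoc ω y : Fin (m + 2) → E) ∈ A →
      t ≤ ∑ k : Fin m, D (ω k.castSucc) (ω k.succ)) :
    ∑ ω, A.indicator (pathWeight ν p) ω ≤ Real.exp (-t ^ 2 / (2 * m * G ^ 2)) := by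
  set l := t / (m * G ^ 2)
  have hl : 0 ≤ l := div_nonneg ht (by positivity)
  have hpoint : ∀ (ω : Fin (m + 1) → E) y,
      A.indicator (pathWeight ν p) (Fin.snoc ω y) ≤ Real.exp (-(l * t)) *
        (pathWeight ν (fun x y => p x y * Real.exp (l * D x y)) ω * p (ω (Fin.last m)) y) := by
    intro ω y
    have hw := mul_nonneg (pathWeight_nonneg hν0 hp0 ω) (hp0 (ω (Fin.last m)) y)
    rw [pathWeight_mul_exp, ← mul_sum, mul_right_comm, mul_left_comm, ← Real.exp_add]
    refine Set.indicator_apply_le' (fun hmem => ?_) fun _ => by positivity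
    rw [pathWeight_snoc]
    rcases (hp0 (ω (Fin.last m)) y).eq_or_lt with hy | hy
    · simp [← hy]
    · refine le_mul_of_one_le_right hw (Real.one_le_exp ?_)
      nlinarith [hA ω y hy hmem]
  calc ∑ ω, A.indicator (pathWeight ν p) ω
      ≤ ∑ ω : Fin (m + 1) → E, ∑ y, Real.exp (-(l * t)) *
          (pathWeight ν (fun x y => p x y * Real.exp (l * D x y)) ω * p (ω (Fin.last m)) y) := by
        rw [Fin.sum_univ_fun_snoc]
        gcongr with ω _ y
        exact hpoint ω y
    _ = Real.exp (-(l * t)) *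
          ∑ ω : Fin (m + 1) → E, pathWeight ν (fun x y => p x y * Real.exp (l * D x y)) ω := by
        simp only [← mul_sum, hp1, mul_one]
    _ ≤ Real.exp (-(l * t)) * Real.exp (G ^ 2 * l ^ 2 / 2) ^ m := by
        gcongr
        simpa [hν1] using sum_pathWeight_le hν0
          (fun x y => mul_nonneg (hp0 x y) (Real.exp_pos _).le) (by positivity) (hD · l) m
    _ = Real.exp (-t ^ 2 / (2 * m * G ^ 2)) := by
        rw [← Real.exp_nat_mul, ← Real.exp_add]
        congr 1
        rcases eq_or_ne ((m : ℝ) * G ^ 2) 0 with h0 | h0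
        · simp [l, h0, mul_assoc]
        · simp only [l]
          field_simp
          ring

/-- `g` solves the Poisson equation `g - P g = P f`, which makes `f x y + g y - g x` a
martingale increment. -/
theorem exists_corrector {E : Type*} [Fintype E] [DecidableEq E] {p : E → E → ℝ}
    (hp0 : ∀ x y, 0 ≤ p x y) (hp1 : ∀ x, ∑ y, p x y = 1)
    (hirr : ∀ x y, ∃ k : ℕ, 0 < ((Matrix.of p) ^ k) x y) {σ : E → ℝ} (hσ1 : ∑ x, σ x = 1)
    (hσinv : ∀ y, ∑ x, σ x * p x y = σ y) {f : E → E → ℝ} {c : ℝ} (hc : 0 ≤ c)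
    (hmean : ∑ x, ∑ y, f x y * (σ x * p x y) = 0) (hbdd : ∀ x y, 0 < p x y → |f x y| ≤ c) :
    ∃ g : E → ℝ, (∀ x, ∑ y, p x y * (f x y + g y) = g x) ∧
      ∀ x, |g x| ≤ pseudoResNormClassical p σ * c := by
  set u : E → ℝ := fun x => ∑ y, p x y * f x y
  have hu0 : σ ⬝ᵥ u = 0 := by
    rw [← hmean]
    refine sum_congr rfl fun x _ => ?_
    rw [mul_sum]
    exact sum_congr rfl fun y _ => by ring
  have hu : ‖u‖ ≤ c := (pi_norm_le_iff_of_nonneg hc).2 fun x => by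
    rw [Real.norm_eq_abs, ← mul_one c, ← hp1 x, mul_sum]
    refine (abs_sum_le_sum_abs _ _).trans (sum_le_sum fun y _ => ?_)
    rw [abs_mul, abs_of_nonneg (hp0 x y), mul_comm c]
    rcases (hp0 x y).eq_or_lt with h | h
    · simp [← h]
    · exact mul_le_mul_of_nonneg_left (hbdd x y h) h.le
  obtain ⟨g, hg, hgN⟩ := exists_poisson_solution (mem_rowStochastic_iff_sum.2 ⟨hp0, hp1⟩) hirr
    (funext hσinv) hσ1 hu0
  refine ⟨g, fun x => ?_, fun x => ?_⟩
  · have := congrFun hg x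
    simp only [Pi.sub_apply, mulVec, dotProduct, u] at this
    simp only [mul_add, sum_add_distrib]
    linarith
  · calc |g x| ≤ ‖g‖ := norm_le_pi_norm g x
      _ ≤ pseudoResNormClassical p σ * ‖u‖ := hgN
      _ ≤ pseudoResNormClassical p σ * c := by
          gcongr
          exact pseudoResNormClassical_nonneg p σ

theorem le_sum_add_sub_of_le_mean_snoc {E : Type*} {m : ℕ} {f : E → E → ℝ} {g : E → ℝ}
    {c N γ : ℝ} (hc : 0 ≤ c) (hg : ∀ x, |g x| ≤ N * c) (ω : Fin (m + 1) → E) (y : E)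
    (hf : |f (ω (Fin.last m)) y| ≤ c)
    (hγ : γ ≤ (1 / (m + 1 : ℕ) : ℝ) * ∑ k : Fin (m + 1),
      f ((Fin.snoc ω y : Fin (m + 2) → E) k.castSucc) ((Fin.snoc ω y : Fin (m + 2) → E) k.succ)) :
    (m + 1 : ℕ) * γ - 2 * ((1 + N) * c) ≤
      ∑ k : Fin m, (f (ω k.castSucc) (ω k.succ) + g (ω k.succ) - g (ω k.castSucc)) := by
  rw [Fin.sum_snoc_castSucc_succ, one_div, inv_mul_eq_div, le_div_iff₀ (by positivity)] at hγ
  simp only [add_sub_assoc, sum_add_distrib,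
    Fin.sum_univ_succ_sub_castSucc fun k => g (ω k)]
  have := abs_le.1 hf
  have := abs_le.1 (hg (ω (Fin.last m)))
  have := abs_le.1 (hg (ω 0))
  nlinarith

theorem hoeffding_classical_fluxes_general
    {E : Type*} [Fintype E] [DecidableEq E]
    (p : E → E → ℝ) (hp0 : ∀ x y, 0 ≤ p x y) (hp1 : ∀ x, ∑ y, p x y = 1)
    -- P is irreducible
    (hPirr : ∀ x y, ∃ n : ℕ, 0 < ((Matrix.of p) ^ n) x y)
    (σ : E → ℝ) (hσ1 : ∑ x, σ x = 1)
    (hσinv : ∀ y, ∑ x, σ x * p x y = σ y)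
    (f : E → E → ℝ) (c : ℝ) (hc : 0 < c)
    -- π(f) = 0, with π(x,y) = σ_x p_{xy}
    (hmean : ∑ x, ∑ y, f x y * (σ x * p x y) = 0)
    -- max over Ẽ of |f| equals c
    (hbdd : ∀ x y, 0 < p x y → |f x y| ≤ c)
    (ν : E → ℝ) (hν0 : ∀ x, 0 ≤ ν x) (hν1 : ∑ x, ν x = 1)
    (γ : ℝ) (n : ℕ) (hn : 1 ≤ n)
    -- G = (1 + ‖(Id−P)^{-1}|_F‖_∞)·c and nγ ≥ 2G
    (hnγ : 2 * ((1 + pseudoResNormClassical p σ) * c) ≤ (n : ℝ) * γ) :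
    -- P_ν( (1/n) Σ_{k=1}^n f(X_k, X_{k+1}) ≥ γ ) ≤ exp(−(nγ − 2G)²/(2(n−1)G²))
    ∑ ω : Fin (n + 1) → E,
      Set.indicator
        {ω : Fin (n + 1) → E |
          γ ≤ (1 / n : ℝ) * ∑ k : Fin n, f (ω k.castSucc) (ω k.succ)}
        (fun ω => ν (ω 0) * ∏ k : Fin n, p (ω k.castSucc) (ω k.succ)) ω
      ≤ Real.exp (-((n : ℝ) * γ - 2 * ((1 + pseudoResNormClassical p σ) * c)) ^ 2 /
          (2 * ((n : ℝ) - 1) * ((1 + pseudoResNormClassical p σ) * c) ^ 2)) := by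
  obtain ⟨m, rfl⟩ : ∃ m, n = m + 1 := ⟨n - 1, by omega⟩
  obtain ⟨g, hg, hgc⟩ := exists_corrector hp0 hp1 hPirr hσ1 hσinv hc.le hmean hbdd
  have hG : ∀ x y, 0 < p x y → |f x y + g y| ≤ (1 + pseudoResNormClassical p σ) * c :=
    fun x y hxy => (abs_add_le _ _).trans (by linarith [hbdd x y hxy, hgc y])
  have hcast : ((m + 1 : ℕ) : ℝ) - 1 = m := by push_cast; ring
  rw [hcast]
  refine sum_indicator_pathWeight_le hp0 hp1 hν0 hν1 (D := fun x y => f x y + g y - g x)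
    (fun x l => ?_) (by linarith) fun ω y hy hmem =>
      le_sum_add_sub_of_le_mean_snoc hc.le hgc ω y (hbdd _ _ hy) hmem
  simpa [hg, add_sub_assoc] using sum_mul_exp_sub_mean_le_of_abs_le (hp0 x) (hp1 x) (hG x) l

/-- **Hoeffding-type concentration bound for empirical fluxes of a classical Markov
chain** (Proposition 5.2). -/
theorem hoeffding_classical_fluxes
    {E : Type*} [Fintype E] [DecidableEq E] [Nonempty E]
    (p : E → E → ℝ) (hp0 : ∀ x y, 0 ≤ p x y) (hp1 : ∀ x, ∑ y, p x y = 1)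
    -- P is irreducible
    (hPirr : ∀ x y, ∃ n : ℕ, 0 < ((Matrix.of p) ^ n) x y)
    (σ : E → ℝ) (hσpos : ∀ x, 0 < σ x) (hσ1 : ∑ x, σ x = 1)
    (hσinv : ∀ y, ∑ x, σ x * p x y = σ y)
    (f : E → E → ℝ) (c : ℝ) (hc : 0 < c)
    -- π(f) = 0, with π(x,y) = σ_x p_{xy}
    (hmean : ∑ x, ∑ y, f x y * (σ x * p x y) = 0)
    -- max over Ẽ of |f| equals c
    (hbdd : ∀ x y, 0 < p x y → |f x y| ≤ c)
    (hatt : ∃ x y, 0 < p x y ∧ |f x y| = c)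
    (ν : E → ℝ) (hν0 : ∀ x, 0 ≤ ν x) (hν1 : ∑ x, ν x = 1)
    (γ : ℝ) (hγ : 0 < γ) (n : ℕ) (hn : 1 ≤ n)
    -- G = (1 + ‖(Id−P)^{-1}|_F‖_∞)·c and nγ ≥ 2G
    (hnγ : 2 * ((1 + pseudoResNormClassical p σ) * c) ≤ (n : ℝ) * γ) :
    -- P_ν( (1/n) Σ_{k=1}^n f(X_k, X_{k+1}) ≥ γ ) ≤ exp(−(nγ − 2G)²/(2(n−1)G²))
    ∑ ω : Fin (n + 1) → E,
      Set.indicator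
        {ω : Fin (n + 1) → E |
          γ ≤ (1 / n : ℝ) * ∑ k : Fin n, f (ω k.castSucc) (ω k.succ)}
        (fun ω => ν (ω 0) * ∏ k : Fin n, p (ω k.castSucc) (ω k.succ)) ω
      ≤ Real.exp (-((n : ℝ) * γ - 2 * ((1 + pseudoResNormClassical p σ) * c)) ^ 2 /
          (2 * ((n : ℝ) - 1) * ((1 + pseudoResNormClassical p σ) * c) ^ 2)) :=
  hoeffding_classical_fluxes_general p hp0 hp1 hPirr σ hσ1 hσinv f c hc hmean hbdd ν hν0 hν1 γ n hn
    hnγ
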